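/- arXiv:1609.03106 — 4 statements merged into one kernel-verified Lean document; each statement's English description precedes it below -/
import Mathlib

section
/- Let n = 2p+1 and d = 2q+1 with p, q natural numbers and p > q ≥ 1, and let θ = 2pq + p + q, k = n − 2 = 2p − 1, α = d. Then θ − 1 ≥ kα − k(k−1)/2 − 1. -/
theorem wfr_universally_good (p q n d θ k α : ℕ)
    (hq : 1 ≤ q) (hpq : q < p)
    (hn : n = 2 * p + 1) (hd : d = 2 * q + 1)
    (hθ : θ = 2 * p * q + p + q) (hk : k = n - 2) (hα : α = d) :
    (θ : ℤ) - 1 ≥ (k : ℤ) * α - (k.choose 2 : ℤ) - 1 := by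
  obtain ⟨a, rfl⟩ : ∃ a, p = a + 1 := ⟨p - 1, by omega⟩
  have hk' : k = 2 * a + 1 := by omega
  subst hk' hθ hα hd
  have hc : (2 * a + 1).choose 2 = (2 * a + 1) * a := by
    rw [Nat.choose_two_right]
    have : 2 * a + 1 - 1 = 2 * a := by omega
    rw [this, Nat.mul_div_assoc _ (dvd_mul_right 2 a), Nat.mul_div_cancel_left a (by norm_num)]
  rw [hc]
  push_cast
  have hqa : (q : ℤ) ≤ a := by exact_mod_cast Nat.lt_succ_iff.mp hpq
  have hq' : (1 : ℤ) ≤ q := by exact_mod_cast hq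
  nlinarith [mul_nonneg (sub_nonneg.mpr hqa) (sub_nonneg.mpr hq')]
end

section
/- Let n = θ, ρ ≥ 2, and consider the circulant n × n 0-1 matrix M where row i has 1s in columns i, i+1, …, i+ρ−1 (indices mod n). Then for any set S of n − ρ rows, the union of the supports of the rows in S has cardinality at least n − 1. -/
theorem ring_construction_reconstruction (n ρ : ℕ) [NeZero n]
    (hρ : 2 ≤ ρ) (hρn : ρ < n)
    (S : Finset (ZMod n)) (hS : S.card = n - ρ) :
    n - 1 ≤ (S.biUnion (fun i =>
      (Finset.range ρ).image (fun t : ℕ => (i + (t : ZMod n))))).card := by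
  classical
  set U := S.biUnion (fun i =>
      (Finset.range ρ).image (fun t : ℕ => (i + (t : ZMod n)))) with hUdef
  have hcard : Fintype.card (ZMod n) = n := ZMod.card n
  set I : ZMod n → Finset (ZMod n) :=
    fun z => (Finset.range ρ).image (fun t : ℕ => z - (t : ZMod n)) with hIdef
  have castinj : ∀ a b : ℕ, a < n → b < n → (a : ZMod n) = b → a = b := by
    intro a b ha hb h
    have := congrArg ZMod.val h
    rwa [ZMod.val_cast_of_lt ha, ZMod.val_cast_of_lt hb] at this
  have hIcard : ∀ z, (I z).card = ρ := by
    intro z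
    rw [hIdef]
    rw [Finset.card_image_of_injOn, Finset.card_range]
    intro a ha b hb hab
    simp only [Finset.coe_range, Set.mem_Iio] at ha hb
    have : (a : ZMod n) = b := by
      have := sub_right_injective hab
      exact this
    exact castinj a b (ha.trans hρn) (hb.trans hρn) this
  have hSeq : ∀ x : ZMod n, x ∉ U → S = (I x)ᶜ := by
    intro x hx
    have hsub : S ⊆ (I x)ᶜ := by
      intro i hi
      rw [Finset.mem_compl]
      intro hmem
      rw [hIdef] at hmem
      simp only [Finset.mem_image, Finset.mem_range] at hmem
      obtain ⟨t, ht, hit⟩ := hmem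
      apply hx
      rw [hUdef]
      rw [Finset.mem_biUnion]
      refine ⟨i, hi, ?_⟩
      simp only [Finset.mem_image, Finset.mem_range]
      exact ⟨t, ht, by rw [← hit]; ring⟩
    apply Finset.eq_of_subset_of_card_le hsub
    rw [Finset.card_compl, hIcard, hcard, hS]
  have key : ∀ x ∉ U, ∀ y ∉ U, x = y := by
    intro x hx y hy
    have hIxy : I x = I y := by
      have := (hSeq x hx).symm.trans (hSeq y hy)
      exact compl_injective this
    have hy_mem : y ∈ I x := by
      rw [hIxy, hIdef]
      simp only [Finset.mem_image, Finset.mem_range]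
      exact ⟨0, by omega, by simp⟩
    rw [hIdef] at hy_mem
    simp only [Finset.mem_image, Finset.mem_range] at hy_mem
    obtain ⟨t, ht, hxt⟩ := hy_mem
    rcases Nat.eq_zero_or_pos t with h0 | hpos
    · subst h0; simpa using hxt
    · exfalso
      have h1 : y + 1 ∈ I x := by
        rw [hIdef]
        simp only [Finset.mem_image, Finset.mem_range]
        refine ⟨t - 1, by omega, ?_⟩
        rw [← hxt]
        have : ((t - 1 : ℕ) : ZMod n) = (t : ZMod n) - 1 := by
          have : t - 1 + 1 = t := by omega
          calc ((t - 1 : ℕ) : ZMod n) = ((t - 1 + 1 : ℕ) : ZMod n) - 1 := by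
                push_cast; ring
            _ = (t : ZMod n) - 1 := by rw [this]
        rw [this]; ring
      rw [hIxy, hIdef] at h1
      simp only [Finset.mem_image, Finset.mem_range] at h1
      obtain ⟨s, hs, hys⟩ := h1
      have : ((s + 1 : ℕ) : ZMod n) = 0 := by
        push_cast
        linear_combination -hys
      have := castinj (s + 1) 0 (by omega) (by omega) (by simpa using this)
      omega
  have hcompl : Uᶜ.card ≤ 1 := by
    apply Finset.card_le_one.mpr
    intro a ha b hb
    rw [Finset.mem_compl] at ha hb
    exact key a ha b hb
  have h2 : U.card + Uᶜ.card = n := by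
    rw [Finset.card_add_card_compl, hcard]
  omega
end

section
/- Let n = θ and ρ ≥ 2 with n > ρ, and define the ring FR code where node i (for i ∈ Z_n) stores packet set {i, i+1, …, i+ρ−1} mod n. Then there exists a set of n − ρ − 1 nodes whose union of stored packets has cardinality strictly less than n − 1. -/
theorem ring_construction_tightness (n ρ : ℕ) [NeZero n]
    (hρ : 2 ≤ ρ) (hρn : ρ < n) :
    ∃ S : Finset (ZMod n), S.card = n - ρ - 1 ∧
      (S.biUnion (fun i =>
        (Finset.range ρ).image (fun t : ℕ => (i + (t : ZMod n))))).card < n - 1 := by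
  refine ⟨(Finset.range (n - ρ - 1)).image (Nat.cast : ℕ → ZMod n), ?_, ?_⟩
  · rw [Finset.card_image_of_injOn, Finset.card_range]
    intro a ha b hb hab
    simp only [Finset.coe_range, Set.mem_Iio] at ha hb
    have ha' : a < n := lt_of_lt_of_le ha (by omega)
    have hb' : b < n := lt_of_lt_of_le hb (by omega)
    have := congrArg ZMod.val hab
    rwa [ZMod.val_natCast_of_lt ha', ZMod.val_natCast_of_lt hb'] at this
  · have hsub : ((Finset.range (n - ρ - 1)).image (Nat.cast : ℕ → ZMod n)).biUnion
        (fun i => (Finset.range ρ).image (fun t : ℕ => (i + (t : ZMod n)))) ⊆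
        (Finset.range (n - 2)).image (Nat.cast : ℕ → ZMod n) := by
      intro x hx
      simp only [Finset.mem_biUnion, Finset.mem_image, Finset.mem_range] at hx ⊢
      obtain ⟨i, ⟨a, ha, rfl⟩, t, ht, rfl⟩ := hx
      exact ⟨a + t, by omega, by push_cast; ring⟩
    calc _ ≤ ((Finset.range (n - 2)).image (Nat.cast : ℕ → ZMod n)).card :=
            Finset.card_le_card hsub
      _ ≤ n - 2 := le_trans (Finset.card_image_le) (by simp)
      _ < n - 1 := by omega
end

section
/- For the circulant matrix C on Z_n with row i having support {i, i+1, …, i+ρ−1} (mod n), where 2 ≤ ρ < n and n = θ: there exists a set S of n − ρ rows such that the union of their supports has cardinality exactly n − 1 (not n). -/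
theorem ring_construction_misses_one (n ρ : ℕ) [NeZero n]
    (hρ : 2 ≤ ρ) (hρn : ρ < n) :
    ∃ S : Finset (ZMod n), S.card = n - ρ ∧
      (S.biUnion (fun i =>
        (Finset.range ρ).image (fun t : ℕ => (i + (t : ZMod n))))).card = n - 1 := by
  have hinj : ∀ a b : ℕ, a < n → b < n → (a : ZMod n) = (b : ZMod n) → a = b := by
    intro a b ha hb h
    have := congrArg ZMod.val h
    rwa [ZMod.val_cast_of_lt ha, ZMod.val_cast_of_lt hb] at this
  refine ⟨(Finset.range (n - ρ)).image (Nat.cast : ℕ → ZMod n), ?_, ?_⟩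
  · rw [Finset.card_image_of_injOn, Finset.card_range]
    intro a ha b hb h
    simp only [Finset.coe_range, Set.mem_Iio] at ha hb
    exact hinj a b (by omega) (by omega) h
  · have : ((Finset.range (n - ρ)).image (Nat.cast : ℕ → ZMod n)).biUnion (fun i =>
        (Finset.range ρ).image (fun t : ℕ => (i + (t : ZMod n)))) =
        (Finset.range (n - 1)).image (Nat.cast : ℕ → ZMod n) := by
      ext x
      simp only [Finset.mem_biUnion, Finset.mem_image, Finset.mem_range]
      constructor
      · rintro ⟨i, ⟨a, ha, rfl⟩, t, ht, rfl⟩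
        exact ⟨a + t, by omega, by push_cast; ring⟩
      · rintro ⟨j, hj, rfl⟩
        by_cases h : j < ρ
        · exact ⟨0, ⟨0, by omega, by simp⟩, j, h, by simp⟩
        · refine ⟨(j - (ρ - 1) : ℕ), ⟨j - (ρ - 1), by omega, rfl⟩, ρ - 1, by omega, ?_⟩
          rw [← Nat.cast_add]
          congr 1
          omega
    rw [this, Finset.card_image_of_injOn, Finset.card_range]
    intro a ha b hb h
    simp only [Finset.coe_range, Set.mem_Iio] at ha hb
    exact hinj a b (by omega) (by omega) h
end
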